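/- Let Y : [0,∞) → L²(ℤ_p) be continuously differentiable (in L²) with dY/dt = W₀Y(t) for all t ≥ 0, ∫_{ℤ_p}Y(x,0)dx = 1, and suppose that Ȳ(t) := ∫_{ℤ_p}Y(x,t)dx > 0 for all t ≥ 0. Then Ȳ is differentiable with Ȳ′(t) = ∫_{ℤ_p} f(y)Y(y,t)dy, and the function X(x,t) := Y(x,t)/Ȳ(t) satisfies ∫_{ℤ_p}X(x,t)dx = 1 for all t ≥ 0 and solves the p-adic Eigen–Schuster equation ∂X/∂t = W₀X(·,t) − Φ(t)X(·,t), where Φ(t) = ∫_{ℤ_p} f(y)X(y,t)dy. -/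

import Mathlib

open MeasureTheory Filter
open scoped Real Topology ENNReal NNReal

namespace PadicES

variable (p : ℕ) [Fact p.Prime]

noncomputable instance : MeasurableSpace ℚ_[p] := borel _
instance : BorelSpace ℚ_[p] := ⟨rfl⟩
noncomputable instance : DecidableEq ℚ_[p] := Classical.decEq _

/-- The closed unit ball `ℤ_p` viewed as a subset of `ℚ_p`. -/
def unitBall : Set ℚ_[p] := {x : ℚ_[p] | ‖x‖ ≤ 1}

lemma isCompact_unitBall : IsCompact (unitBall p) := by
  have : unitBall p = Metric.closedBall (0 : ℚ_[p]) 1 := by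
    ext x; simp [unitBall, Metric.mem_closedBall, dist_eq_norm]
  rw [this]; exact isCompact_closedBall _ _

lemma interior_unitBall_nonempty : (interior (unitBall p)).Nonempty := by
  have : unitBall p = Metric.closedBall (0 : ℚ_[p]) 1 := by
    ext x; simp [unitBall, Metric.mem_closedBall, dist_eq_norm]
  rw [this, (IsUltrametricDist.isOpen_closedBall (0 : ℚ_[p]) one_ne_zero).interior_eq]
  exact ⟨0, by simp⟩

/-- The Haar measure `dx` on `(ℚ_p, +)`, normalized so that `ℤ_p` has measure `1`. -/
noncomputable def haar : Measure ℚ_[p] :=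
  Measure.addHaarMeasure ⟨⟨unitBall p, isCompact_unitBall p⟩, interior_unitBall_nonempty p⟩

lemma norm_scaled_le_one (y : ℚ_[p]) (h : ¬ ‖y‖ ≤ 1) :
    ‖(p : ℚ_[p]) ^ ((-y.valuation).toNat) * y‖ ≤ 1 := by
  have hy : y ≠ 0 := by rintro rfl; simp at h
  have hv : y.valuation < 0 := by
    by_contra hv
    push_neg at hv
    exact h ((Padic.norm_le_one_iff_val_nonneg (p := p) y).mpr hv)
  have hp0 : (0 : ℝ) < (p : ℝ) := by
    exact_mod_cast (Fact.out : p.Prime).pos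
  rw [norm_mul, norm_pow, Padic.norm_p, Padic.norm_eq_zpow_neg_valuation hy]
  rw [inv_pow, ← zpow_natCast, Int.toNat_of_nonneg (by omega)]
  rw [← zpow_neg, ← zpow_add₀ (ne_of_gt hp0)]
  simp

/-- The `p`-adic fractional part `{y}_p`, as a rational number. -/
noncomputable def fract (y : ℚ_[p]) : ℚ :=
  if h : ‖y‖ ≤ 1 then 0
  else
    ((PadicInt.toZModPow ((-y.valuation).toNat)
        (⟨(p : ℚ_[p]) ^ ((-y.valuation).toNat) * y, norm_scaled_le_one p y h⟩ :
          ℤ_[p])).val : ℚ) / (p : ℚ) ^ ((-y.valuation).toNat)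

/-- The standard additive character `χ_p(y) = exp(2 π i {y}_p)` of `(ℚ_p,+)`. -/
noncomputable def stdChar (y : ℚ_[p]) : ℂ :=
  Complex.exp (2 * (Real.pi : ℂ) * Complex.I * (fract p y : ℂ))

/-- The ball `a + p^R ℤ_p` of radius `p^{-R}` centered at `a`. -/
def ballSet (R : ℤ) (a : ℚ_[p]) : Set ℚ_[p] := {x : ℚ_[p] | ‖x - a‖ ≤ (p : ℝ) ^ (-R)}

/-- `Ω(p^R |x - a|_p)`: the indicator function of the ball `a + p^R ℤ_p` (complex valued). -/
noncomputable def ballInd (R : ℤ) (a x : ℚ_[p]) : ℂ := if ‖x - a‖ ≤ (p : ℝ) ^ (-R) then 1 else 0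

/-- `Ω(p^R |x - a|_p)`: the indicator function of the ball `a + p^R ℤ_p` (real valued). -/
noncomputable def ballIndR (R : ℤ) (a x : ℚ_[p]) : ℝ := if ‖x - a‖ ≤ (p : ℝ) ^ (-R) then 1 else 0

/-- The Kozyrev wavelet
`Ψ_{rnj}(x) = p^{-r/2} χ_p(p^{-1} j (p^r x - n)) Ω(|p^r x - n|_p)`. -/
noncomputable def wavelet (r : ℤ) (n : ℚ_[p]) (j : ℕ) (x : ℚ_[p]) : ℂ :=
  (((p : ℝ) ^ (-(r : ℝ) / 2) : ℝ) : ℂ) *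
    stdChar p ((p : ℚ_[p])⁻¹ * (j : ℚ_[p]) * ((p : ℚ_[p]) ^ r * x - n)) *
    ballInd p 0 0 ((p : ℚ_[p]) ^ r * x - n)

/-- The Fourier transform `ĝ(ξ) = ∫ χ_p(ξ x) g(x) dx` of a complex-valued function. -/
noncomputable def fourierT (g : ℚ_[p] → ℂ) (ξ : ℚ_[p]) : ℂ :=
  ∫ x, stdChar p (ξ * x) * g x ∂(haar p)

/-- A function on `ℚ_p` is radial if it only depends on `|x|_p`. -/
def IsRadial (g : ℚ_[p] → ℝ) : Prop := ∀ x y : ℚ_[p], ‖x‖ = ‖y‖ → g x = g y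

/-- Convolution `(g ∗ φ)(x) = ∫ g(x - y) φ(y) dy` of a real kernel with a complex function. -/
noncomputable def conv (g : ℚ_[p] → ℝ) (φ : ℚ_[p] → ℂ) (x : ℚ_[p]) : ℂ :=
  ∫ y, (g (x - y) : ℂ) * φ y ∂(haar p)

/-- Real-valued convolution. -/
noncomputable def convR (g φ : ℚ_[p] → ℝ) (x : ℚ_[p]) : ℝ :=
  ∫ y, g (x - y) * φ y ∂(haar p)

/-- The fitness function `f(x) = Σ_{I ∈ G_M} f(I) Ω(p^M |x - I|_p)`. -/
noncomputable def fitness (fc : ℚ_[p] → ℝ) (M : ℕ) (G : Finset ℚ_[p]) (x : ℚ_[p]) : ℝ :=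
  ∑ I ∈ G, fc I * ballIndR p M I x

/-- The matrix `W⁰` of the operator `W₀ φ = Q₀ ∗ (f φ)` on the span of the
indicator functions of the balls `I + p^M ℤ_p`, `I ∈ G_M`. -/
noncomputable def Wmat (Q₀ fc : ℚ_[p] → ℝ) (M : ℕ) (G : Finset ℚ_[p]) :
    Matrix {I : ℚ_[p] // I ∈ G} {I : ℚ_[p] // I ∈ G} ℝ :=
  fun I J =>
    if I = J then fc I.1 * ∫ z in ballSet p M 0, Q₀ z ∂(haar p)
    else fc I.1 * Q₀ (J.1 - I.1) * (p : ℝ) ^ (-(M : ℤ))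


/-- The operator `W₀ φ = Q₀ ∗ (f φ)` (complex-valued version). -/
noncomputable def Wop (Q₀ fc : ℚ_[p] → ℝ) (M : ℕ) (G : Finset ℚ_[p]) (φ : ℚ_[p] → ℂ)
    (x : ℚ_[p]) : ℂ :=
  conv p Q₀ (fun y => ((fitness p fc M G y : ℝ) : ℂ) * φ y) x

/-- The operator `W₀ φ = Q₀ ∗ (f φ)` (real-valued version). -/
noncomputable def WopR (Q₀ fc : ℚ_[p] → ℝ) (M : ℕ) (G : Finset ℚ_[p]) (φ : ℚ_[p] → ℝ)
    (x : ℚ_[p]) : ℝ :=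
  convR p Q₀ (fun y => fitness p fc M G y * φ y) x

/-- The `p`-adic heat kernel `Z(ξ; σ, α) = ∫ χ_p(ξ x) e^{-σ |x|_p^α} dx`. -/
noncomputable def heatK (σ α : ℝ) (ξ : ℚ_[p]) : ℂ :=
  ∫ x, stdChar p (ξ * x) * ((Real.exp (-σ * ‖x‖ ^ α) : ℝ) : ℂ) ∂(haar p)

/-!
Integrating `∂Y/∂t = Q₀ ∗ (f Y)` over `ℤ_p` gives `Ȳ' = ∫ f Y`: since `ℤ_p` is an additive
subgroup of `ℚ_p`, Fubini and translation invariance of `dx` turn `∫_{ℤ_p} Q₀ ∗ (f Y)` into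
`(∫_{ℤ_p} Q₀) · ∫_{ℤ_p} f Y`. The rest is the quotient rule for `X = Ȳ⁻¹ • Y`, which holds for
any linear evolution `Y' = T Y` and any continuous linear functional in place of `∫`.
-/

section Normalization

variable {E : Type*} [NormedAddCommGroup E] [NormedSpace ℝ E]

theorem hasDerivAt_inv_smul_of_hasDerivAt_clm (φ : E →L[ℝ] ℝ) (T : E →L[ℝ] E) {Y : ℝ → E}
    {t : ℝ} (hY : HasDerivAt Y (T (Y t)) t) (ht : φ (Y t) ≠ 0) :
    HasDerivAt (fun s => (φ (Y s))⁻¹ • Y s)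
      (T ((φ (Y t))⁻¹ • Y t) - φ (T ((φ (Y t))⁻¹ • Y t)) • ((φ (Y t))⁻¹ • Y t)) t := by
  have hφY : HasDerivAt (fun s => φ (Y s)) (φ (T (Y t))) t :=
    φ.hasFDerivAt.comp_hasDerivAt t hY
  have hφY_inv : HasDerivAt (fun s => (φ (Y s))⁻¹) (-φ (T (Y t)) / φ (Y t) ^ 2) t :=
    hφY.inv ht
  convert hφY_inv.smul hY using 1
  · rfl
  rw [map_smul, map_smul, smul_eq_mul, smul_smul, sub_eq_add_neg, ← neg_smul]
  congr 2
  field_simp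

end Normalization

section IntegralL2

variable {α : Type*} [MeasurableSpace α] (μ : Measure α) [IsFiniteMeasure μ]

noncomputable def integralL2 : Lp ℝ 2 μ →L[ℝ] ℝ :=
  innerSL ℝ (indicatorConstLp 2 MeasurableSet.univ (measure_ne_top μ Set.univ) (1 : ℝ))

theorem integralL2_apply (f : Lp ℝ 2 μ) : integralL2 μ f = ∫ x, f x ∂μ := by
  rw [integralL2, innerSL_apply_apply, L2.inner_indicatorConstLp_one, Measure.restrict_univ]

end IntegralL2

instance : (haar p).IsAddHaarMeasure := Measure.isAddHaarMeasure_addHaarMeasure _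

theorem measurableSet_unitBall : MeasurableSet (unitBall p) :=
  (isClosed_le continuous_norm continuous_const).measurableSet

instance : IsFiniteMeasure ((haar p).restrict (unitBall p)) :=
  isFiniteMeasure_restrict.2 (isCompact_unitBall p).measure_lt_top.ne

variable {p}

theorem add_mem_unitBall {x y : ℚ_[p]} (hx : x ∈ unitBall p) (hy : y ∈ unitBall p) :
    x + y ∈ unitBall p :=
  (IsUltrametricDist.norm_add_le_max x y).trans (max_le hx hy)

theorem sub_mem_unitBall_iff {x y : ℚ_[p]} (hy : y ∈ unitBall p) :
    x - y ∈ unitBall p ↔ x ∈ unitBall p := by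
  refine ⟨fun h => by simpa using add_mem_unitBall h hy, fun hx => ?_⟩
  rw [sub_eq_add_neg]
  exact add_mem_unitBall hx (by simpa [unitBall] using hy)

theorem setIntegral_unitBall_comp_sub (Q : ℚ_[p] → ℝ) {y : ℚ_[p]} (hy : y ∈ unitBall p) :
    ∫ x in unitBall p, Q (x - y) ∂haar p = ∫ x in unitBall p, Q x ∂haar p := by
  have hind : (unitBall p).indicator (fun x => Q (x - y)) =
      fun x => (unitBall p).indicator Q (x - y) := by
    ext x
    by_cases hx : x ∈ unitBall p
    · rw [Set.indicator_of_mem hx, Set.indicator_of_mem ((sub_mem_unitBall_iff hy).2 hx)]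
    · rw [Set.indicator_of_notMem hx, Set.indicator_of_notMem (mt (sub_mem_unitBall_iff hy).1 hx)]
  rw [← integral_indicator (measurableSet_unitBall p), hind, integral_sub_right_eq_self,
    integral_indicator (measurableSet_unitBall p)]

theorem setIntegral_unitBall_convR {Q H : ℚ_[p] → ℝ} (hQ : Integrable Q (haar p))
    (hH : IntegrableOn H (unitBall p) (haar p)) (hH0 : ∀ y ∉ unitBall p, H y = 0) :
    ∫ x in unitBall p, convR p Q H x ∂haar p =
      (∫ x in unitBall p, Q x ∂haar p) * ∫ y in unitBall p, H y ∂haar p := by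
  have hHint : Integrable H (haar p) := by
    rw [← Set.indicator_eq_self.2 (Function.support_subset_iff'.2 hH0)]
    exact (integrable_indicator_iff (measurableSet_unitBall p)).2 hH
  have hconv : ∀ x, convR p Q H x = ∫ y in unitBall p, Q (x - y) * H y ∂haar p := fun x =>
    (setIntegral_eq_integral_of_forall_compl_eq_zero fun y hy => by rw [hH0 y hy, mul_zero]).symm
  have hprod : Integrable (Function.uncurry fun x y => Q (x - y) * H y)
      (((haar p).restrict (unitBall p)).prod ((haar p).restrict (unitBall p))) := by
    rw [Measure.prod_restrict]
    exact (hHint.convolution_integrand (ContinuousLinearMap.mul ℝ ℝ).flip hQ).restrict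
  calc ∫ x in unitBall p, convR p Q H x ∂haar p
      = ∫ y in unitBall p, (∫ x in unitBall p, Q (x - y) ∂haar p) * H y ∂haar p := by
        simp_rw [hconv, ← integral_mul_const]
        exact integral_integral_swap hprod
    _ = ∫ y in unitBall p, (∫ x in unitBall p, Q x ∂haar p) * H y ∂haar p :=
        setIntegral_congr_fun (measurableSet_unitBall p) fun y hy => by
          rw [setIntegral_unitBall_comp_sub Q hy]
    _ = _ := integral_const_mul _ _

theorem ballIndR_eq_indicator (R : ℤ) (a : ℚ_[p]) :
    ballIndR p R a = (Metric.closedBall a ((p : ℝ) ^ (-R))).indicator 1 := by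
  ext x
  simp [ballIndR, Set.indicator, dist_eq_norm]

theorem measurable_fitness (fc : ℚ_[p] → ℝ) (M : ℕ) (G : Finset ℚ_[p]) :
    Measurable (fitness p fc M G) :=
  Finset.measurable_sum _ fun I _ => (ballIndR_eq_indicator M I ▸
    measurable_const.indicator Metric.isClosed_closedBall.measurableSet).const_mul _

theorem norm_fitness_le (fc : ℚ_[p] → ℝ) (M : ℕ) (G : Finset ℚ_[p]) (x : ℚ_[p]) :
    ‖fitness p fc M G x‖ ≤ ∑ I ∈ G, |fc I| := by
  refine (norm_sum_le _ _).trans (Finset.sum_le_sum fun I _ => ?_)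
  rw [Real.norm_eq_abs, abs_mul]
  unfold ballIndR
  split_ifs <;> simp

theorem fitness_eq_zero_of_notMem {fc : ℚ_[p] → ℝ} {M : ℕ} {G : Finset ℚ_[p]}
    (hG : ∀ I ∈ G, ‖I‖ ≤ 1) {y : ℚ_[p]} (hy : y ∉ unitBall p) : fitness p fc M G y = 0 := by
  refine Finset.sum_eq_zero fun I hI => ?_
  rw [ballIndR, if_neg, mul_zero]
  intro hyI
  have hpM : (p : ℝ) ^ (-(M : ℤ)) ≤ 1 :=
    zpow_le_one_of_nonpos₀ (mod_cast (Fact.out : p.Prime).one_lt.le) (by omega)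
  exact hy (by simpa only [sub_add_cancel] using add_mem_unitBall (hyI.trans hpM) (hG I hI))

theorem setIntegral_unitBall_WopR {Q₀ : ℚ_[p] → ℝ} (hQ₀ : Integrable Q₀ (haar p))
    {fc : ℚ_[p] → ℝ} {M : ℕ} {G : Finset ℚ_[p]} (hG : ∀ I ∈ G, ‖I‖ ≤ 1)
    (g : Lp ℝ 2 ((haar p).restrict (unitBall p))) :
    ∫ x in unitBall p, WopR p Q₀ fc M G g x ∂haar p =
      (∫ x in unitBall p, Q₀ x ∂haar p) * ∫ x in unitBall p, fitness p fc M G x * g x ∂haar p :=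
  setIntegral_unitBall_convR hQ₀
    (((Lp.memLp g).integrable one_le_two).bdd_mul (measurable_fitness fc M G).aestronglyMeasurable
      (Eventually.of_forall (norm_fitness_le fc M G)))
    fun y hy => by rw [fitness_eq_zero_of_notMem hG hy, zero_mul]

theorem eigen_schuster_from_linear_general (p : ℕ) [Fact p.Prime] (Q₀ : ℚ_[p] → ℝ)
    (hint : Integrable Q₀ (haar p))
    (hone : ∫ x in unitBall p, Q₀ x ∂(haar p) = 1)
    (M : ℕ) (G : Finset ℚ_[p])
    (hGsub : ∀ I ∈ G, ‖I‖ ≤ 1)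
    (fc : ℚ_[p] → ℝ)
    -- `T` is the operator `W₀` acting on the real Hilbert space `L²(ℤ_p)`
    (T : Lp ℝ 2 ((haar p).restrict (unitBall p)) →L[ℝ]
          Lp ℝ 2 ((haar p).restrict (unitBall p)))
    (hT : ∀ g : Lp ℝ 2 ((haar p).restrict (unitBall p)),
      (T g : ℚ_[p] → ℝ) =ᵐ[(haar p).restrict (unitBall p)] WopR p Q₀ fc M G g)
    (Y : ℝ → Lp ℝ 2 ((haar p).restrict (unitBall p)))
    (hY : ∀ t : ℝ, 0 ≤ t → HasDerivAt Y (T (Y t)) t)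
    (hYpos : ∀ t : ℝ, 0 ≤ t → 0 < ∫ x, Y t x ∂((haar p).restrict (unitBall p))) :
    -- `Ȳ` is differentiable with `Ȳ'(t) = ∫ f(y) Y(y,t) dy`
    (∀ t : ℝ, 0 ≤ t →
      HasDerivAt (fun s : ℝ => ∫ x, Y s x ∂((haar p).restrict (unitBall p)))
        (∫ x, fitness p fc M G x * Y t x ∂((haar p).restrict (unitBall p))) t) ∧
    -- `X(t) = Y(t)/Ȳ(t)` has total concentration `1`
    (∀ t : ℝ, 0 ≤ t →
      ∫ x, ((∫ x', Y t x' ∂((haar p).restrict (unitBall p)))⁻¹ • Y t) x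
          ∂((haar p).restrict (unitBall p)) = 1) ∧
    -- and solves the `p`-adic Eigen–Schuster equation
    (∀ t : ℝ, 0 ≤ t →
      HasDerivAt
        (fun s : ℝ => (∫ x', Y s x' ∂((haar p).restrict (unitBall p)))⁻¹ • Y s)
        (T ((∫ x', Y t x' ∂((haar p).restrict (unitBall p)))⁻¹ • Y t) -
          ((∫ x', fitness p fc M G x' *
              (((∫ x'', Y t x'' ∂((haar p).restrict (unitBall p)))⁻¹ • Y t) x')
              ∂((haar p).restrict (unitBall p))) •
            ((∫ x', Y t x' ∂((haar p).restrict (unitBall p)))⁻¹ • Y t))) t) := by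
  have hTint : ∀ g, ∫ x, T g x ∂(haar p).restrict (unitBall p) =
      ∫ x, fitness p fc M G x * g x ∂(haar p).restrict (unitBall p) := fun g => by
    rw [integral_congr_ae (hT g), setIntegral_unitBall_WopR hint hGsub, hone, one_mul]
  have hYbar_ne : ∀ t, 0 ≤ t → integralL2 _ (Y t) ≠ 0 := fun t ht => by
    rw [integralL2_apply]
    exact (hYpos t ht).ne'
  refine ⟨fun t ht => ?_, fun t ht => ?_, fun t ht => ?_⟩
  · simpa only [Function.comp_def, integralL2_apply, hTint] using
      (integralL2 _).hasFDerivAt.comp_hasDerivAt t (hY t ht)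
  · rw [← integralL2_apply, map_smul, integralL2_apply, smul_eq_mul,
      inv_mul_cancel₀ (hYpos t ht).ne']
  · simpa only [integralL2_apply, hTint] using
      hasDerivAt_inv_smul_of_hasDerivAt_clm _ T (hY t ht) (hYbar_ne t ht)

/-- If `Y : [0,∞) → L²(ℤ_p)` is differentiable with `dY/dt = W₀Y(t)`,
`∫ Y(0) = 1` and `Ȳ(t) = ∫ Y(t) > 0`, then `Ȳ'(t) = ∫ f Y(t)`, and `X(t) = Y(t)/Ȳ(t)` has
total mass `1` and solves the `p`-adic Eigen–Schuster equation
`∂X/∂t = W₀X - Φ(t)X` with `Φ(t) = ∫ f X(t)`. -/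
theorem eigen_schuster_from_linear (p : ℕ) [Fact p.Prime] (Q₀ : ℚ_[p] → ℝ)
    (hpos : ∀ x : ℚ_[p], 0 ≤ Q₀ x)
    (hrad : IsRadial p Q₀)
    (hsupp : ∀ x : ℚ_[p], ¬ ‖x‖ ≤ 1 → Q₀ x = 0)
    (hint : Integrable Q₀ (haar p)) (hint2 : MemLp Q₀ 2 (haar p))
    (hone : ∫ x in unitBall p, Q₀ x ∂(haar p) = 1)
    (M : ℕ) (hM : 1 ≤ M) (G : Finset ℚ_[p])
    (hGsub : ∀ I ∈ G, ‖I‖ ≤ 1)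
    (hG : ∀ x : ℚ_[p], ‖x‖ ≤ 1 → ∃! I : ℚ_[p], I ∈ G ∧ ‖x - I‖ ≤ (p : ℝ) ^ (-(M : ℤ)))
    (fc : ℚ_[p] → ℝ) (hfc : ∀ I ∈ G, 0 < fc I)
    -- `T` is the operator `W₀` acting on the real Hilbert space `L²(ℤ_p)`
    (T : Lp ℝ 2 ((haar p).restrict (unitBall p)) →L[ℝ]
          Lp ℝ 2 ((haar p).restrict (unitBall p)))
    (hT : ∀ g : Lp ℝ 2 ((haar p).restrict (unitBall p)),
      (T g : ℚ_[p] → ℝ) =ᵐ[(haar p).restrict (unitBall p)] WopR p Q₀ fc M G g)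
    (Y : ℝ → Lp ℝ 2 ((haar p).restrict (unitBall p)))
    (hY : ∀ t : ℝ, 0 ≤ t → HasDerivAt Y (T (Y t)) t)
    (hY0 : ∫ x, Y 0 x ∂((haar p).restrict (unitBall p)) = 1)
    (hYpos : ∀ t : ℝ, 0 ≤ t → 0 < ∫ x, Y t x ∂((haar p).restrict (unitBall p))) :
    -- `Ȳ` is differentiable with `Ȳ'(t) = ∫ f(y) Y(y,t) dy`
    (∀ t : ℝ, 0 ≤ t →
      HasDerivAt (fun s : ℝ => ∫ x, Y s x ∂((haar p).restrict (unitBall p)))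
        (∫ x, fitness p fc M G x * Y t x ∂((haar p).restrict (unitBall p))) t) ∧
    -- `X(t) = Y(t)/Ȳ(t)` has total concentration `1`
    (∀ t : ℝ, 0 ≤ t →
      ∫ x, ((∫ x', Y t x' ∂((haar p).restrict (unitBall p)))⁻¹ • Y t) x
          ∂((haar p).restrict (unitBall p)) = 1) ∧
    -- and solves the `p`-adic Eigen–Schuster equation
    (∀ t : ℝ, 0 ≤ t →
      HasDerivAt
        (fun s : ℝ => (∫ x', Y s x' ∂((haar p).restrict (unitBall p)))⁻¹ • Y s)
        (T ((∫ x', Y t x' ∂((haar p).restrict (unitBall p)))⁻¹ • Y t) -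
          ((∫ x', fitness p fc M G x' *
              (((∫ x'', Y t x'' ∂((haar p).restrict (unitBall p)))⁻¹ • Y t) x')
              ∂((haar p).restrict (unitBall p))) •
            ((∫ x', Y t x' ∂((haar p).restrict (unitBall p)))⁻¹ • Y t))) t) :=
  eigen_schuster_from_linear_general p Q₀ hint hone M G hGsub fc T hT Y hY hYpos

end PadicES
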